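/- arXiv:2105.13837 — 6 statements merged into one kernel-verified Lean document; each statement's English description precedes it below -/
import Mathlib

section
/- If an infinite play π in the product game graph converges to an SCC S (i.e., eventually all states of π lie in S and revisit each other), then the input projection of π converges to the SCC of G_I containing the projection of S, and the output projection of π converges to the SCC of G_O containing the projection of S. -/
open scoped Classical

/-- Reachability: reflexive-transitive closure of the edge relation. -/
def Reach {V : Type*} (E : V → V → Prop) : V → V → Prop := Relation.ReflTransGen E

/-- Two vertices lie in the same strongly connected component: mutual reachability. -/
def SameSCC {V : Type*} (E : V → V → Prop) (s t : V) : Prop := Reach E s t ∧ Reach E t s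

/-- Edge relation of the product of two directed graphs (componentwise). -/
def prodEdge {I O : Type*} (EI : I → I → Prop) (EO : O → O → Prop) :
    I × O → I × O → Prop := fun p q => EI p.1 q.1 ∧ EO p.2 q.2

/-- A system strategy: given the history of states so far and the new environment
input, choose the new output. -/
abbrev Strat (I O : Type*) := List (I × O) → I → O

/-- The history (prefix) of a play up to and including position `n`. -/
def hist {I O : Type*} (π : ℕ → I × O) (n : ℕ) : List (I × O) := (List.range (n + 1)).map π

/-- A play is consistent with system strategy `f` from state `s`. -/
def Consistent {I O : Type*} (f : Strat I O) (s : I × O) (π : ℕ → I × O) : Prop :=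
  π 0 = s ∧ ∀ n, (π (n + 1)).2 = f (hist π n) (π (n + 1)).1

/-- All environment moves along the play are edges of the input graph. -/
def EnvLegal {I O : Type*} (EI : I → I → Prop) (π : ℕ → I × O) : Prop :=
  ∀ n, EI (π n).1 (π (n + 1)).1

/-- All system moves along the play are edges of the output graph. -/
def SysLegal {I O : Type*} (EO : O → O → Prop) (π : ℕ → I × O) : Prop :=
  ∀ n, EO (π n).2 (π (n + 1)).2

/-- The play satisfies `P` infinitely often. -/
def InfOften {V : Type*} (P : V → Prop) (π : ℕ → V) : Prop := ∀ N, ∃ n, N ≤ n ∧ P (π n)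

/-- `f` is a winning system strategy for the Büchi condition `GF acc` from `s`:
every play from `s` consistent with `f` in which the environment moves legally has
legal system moves and visits `acc` infinitely often. -/
def WinningFrom {I O : Type*} (EI : I → I → Prop) (EO : O → O → Prop)
    (acc : I × O → Prop) (f : Strat I O) (s : I × O) : Prop :=
  ∀ π : ℕ → I × O, Consistent f s π → EnvLegal EI π →
    SysLegal EO π ∧ InfOften acc π

/-- The system can win the weak Büchi game `GF acc` from `s`. -/
def SysWins {I O : Type*} (EI : I → I → Prop) (EO : O → O → Prop)
    (acc : I × O → Prop) (s : I × O) : Prop := ∃ f, WinningFrom EI EO acc f s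

/-- Projection onto the inputs of the SCC (of the product graph) containing `s`. -/
def sccProjI {I O : Type*} (EI : I → I → Prop) (EO : O → O → Prop) (s : I × O) : Set I :=
  {i' | ∃ o', SameSCC (prodEdge EI EO) s (i', o')}

/-- Projection onto the outputs of the SCC (of the product graph) containing `s`. -/
def sccProjO {I O : Type*} (EI : I → I → Prop) (EO : O → O → Prop) (s : I × O) : Set O :=
  {o' | ∃ i', SameSCC (prodEdge EI EO) s (i', o')}


private lemma reach_fst {I O : Type*} {EI : I → I → Prop} {EO : O → O → Prop}
    {p q : I × O} (h : Reach (prodEdge EI EO) p q) : Reach EI p.1 q.1 := by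
  induction h with
  | refl => exact Relation.ReflTransGen.refl
  | tail _ he ih => exact ih.tail he.1

private lemma reach_snd {I O : Type*} {EI : I → I → Prop} {EO : O → O → Prop}
    {p q : I × O} (h : Reach (prodEdge EI EO) p q) : Reach EO p.2 q.2 := by
  induction h with
  | refl => exact Relation.ReflTransGen.refl
  | tail _ he ih => exact ih.tail he.2

/-- If an infinite play in the product game graph converges to an SCC S, then its
input projection converges to the SCC of G_I containing the input projection of S,
and its output projection converges to the SCC of G_O containing the output
projection of S. -/
theorem play_projection_convergence {I O : Type*} [Fintype I] [Fintype O]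
    (EI : I → I → Prop) (EO : O → O → Prop) (π : ℕ → I × O)
    (hplay : ∀ n, prodEdge EI EO (π n) (π (n + 1)))
    (S : Set (I × O)) (s0 : I × O)
    (hS : S = {t | SameSCC (prodEdge EI EO) s0 t})
    (hconv : ∃ N, ∀ n, N ≤ n → π n ∈ S) :
    (∃ N, ∀ n, N ≤ n → SameSCC EI (π n).1 s0.1) ∧
    (∃ N, ∀ n, N ≤ n → SameSCC EO (π n).2 s0.2) := by
  obtain ⟨N, hN⟩ := hconv
  constructor
  · refine ⟨N, fun n hn => ?_⟩
    have h := hN n hn; rw [hS] at h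
    exact ⟨reach_fst h.2, reach_fst h.1⟩
  · refine ⟨N, fun n hn => ?_⟩
    have h := hN n hn; rw [hS] at h
    exact ⟨reach_snd h.2, reach_snd h.1⟩
end

section
/- (One-step delay lemma) In a separated weak Büchi game, if inputs i0, i1 satisfy that (i0, i1) is an edge of the input graph G_I, and the system has a winning strategy from state (i0, o0), then the system has a winning strategy from state (i1, o0). Specifically, the delayed strategy f_d defined by f_d((i1,o0),(i2,o1),...,(im,o_{m-1}), i_{m+1}) = f((i0,o0),(i1,o1),...,(i_{m-1},o_{m-1}), i_m) is winning from (i1, o0). -/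
open scoped Classical

/-- The delayed strategy: on history ((i1,o0),(i2,o1),…,(im,o_{m-1})) and new input
i_{m+1}, it plays f((i0,o0),(i1,o1),…,(i_{m-1},o_{m-1}), i_m). -/
def delayed {I O : Type*} (f : Strat I O) (i0 : I) : Strat I O :=
  fun h _i =>
    f ((i0 :: (h.map Prod.fst).dropLast).zip (h.map Prod.snd))
      (((h.getLast?).map Prod.fst).getD i0)


/-! ### Auxiliary machinery -/

/-- Paths of an exact length. -/
def PathN {V : Type*} (E : V → V → Prop) : ℕ → V → V → Prop
  | 0, u, v => u = v
  | n+1, u, v => ∃ w, E u w ∧ PathN E n w v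

lemma pathN_one {V : Type*} {E : V → V → Prop} {u v : V} (h : E u v) : PathN E 1 u v :=
  ⟨v, h, rfl⟩

lemma pathN_comp {V : Type*} {E : V → V → Prop} {a b : ℕ} {u v w : V}
    (h1 : PathN E a u v) (h2 : PathN E b v w) : PathN E (a + b) u w := by
  induction a generalizing u with
  | zero => cases h1; simpa using h2
  | succ n ih =>
    obtain ⟨x, hx, hp⟩ := h1
    rw [Nat.succ_add]
    exact ⟨x, hx, ih hp⟩

lemma pathN_cast {V : Type*} {E : V → V → Prop} {a b : ℕ} {u v : V}
    (h : a = b) (hp : PathN E a u v) : PathN E b u v := h ▸ hp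

lemma pathN_split {V : Type*} {E : V → V → Prop} {a b : ℕ} {u w : V}
    (h : PathN E (a + b) u w) : ∃ v, PathN E a u v ∧ PathN E b v w := by
  induction a generalizing u with
  | zero => exact ⟨u, rfl, by simpa using h⟩
  | succ n ih =>
    rw [Nat.succ_add] at h
    obtain ⟨x, hx, hp⟩ := h
    obtain ⟨v, hv1, hv2⟩ := ih hp
    exact ⟨v, ⟨x, hx, hv1⟩, hv2⟩

lemma reach_iff_pathN {V : Type*} {E : V → V → Prop} {u v : V} :
    Reach E u v ↔ ∃ n, PathN E n u v := by
  constructor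
  · intro h
    induction h with
    | refl => exact ⟨0, rfl⟩
    | tail _ he ih =>
      obtain ⟨n, hn⟩ := ih
      exact ⟨n + 1, pathN_comp hn (pathN_one he)⟩
  · rintro ⟨n, hn⟩
    induction n generalizing u with
    | zero => cases hn; exact Relation.ReflTransGen.refl
    | succ m ih =>
      obtain ⟨w, hw, hp⟩ := hn
      exact Relation.ReflTransGen.head hw (ih hp)

lemma pathN_prod {I O : Type*} {EI : I → I → Prop} {EO : O → O → Prop} {n : ℕ}
    {p q : I × O} :
    PathN (prodEdge EI EO) n p q ↔ PathN EI n p.1 q.1 ∧ PathN EO n p.2 q.2 := by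
  induction n generalizing p with
  | zero =>
    constructor
    · rintro rfl; exact ⟨rfl, rfl⟩
    · rintro ⟨h1, h2⟩
      exact Prod.ext h1 h2
  | succ m ih =>
    constructor
    · rintro ⟨w, ⟨he1, he2⟩, hp⟩
      obtain ⟨h1, h2⟩ := ih.1 hp
      exact ⟨⟨w.1, he1, h1⟩, ⟨w.2, he2, h2⟩⟩
    · rintro ⟨⟨w1, he1, h1⟩, ⟨w2, he2, h2⟩⟩
      exact ⟨(w1, w2), ⟨he1, he2⟩, ih.2 ⟨h1, h2⟩⟩

lemma mem_sccProjI {I O : Type*} {EI : I → I → Prop} {EO : O → O → Prop}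
    {i i' : I} {o : O} :
    i' ∈ sccProjI EI EO (i, o) ↔
      ∃ a b, PathN EI a i i' ∧ PathN EI b i' i ∧ PathN EO (a + b) o o := by
  constructor
  · rintro ⟨o', h1, h2⟩
    rw [reach_iff_pathN] at h1 h2
    obtain ⟨a, ha⟩ := h1
    obtain ⟨b, hb⟩ := h2
    rw [pathN_prod] at ha hb
    exact ⟨a, b, ha.1, hb.1, pathN_comp ha.2 hb.2⟩
  · rintro ⟨a, b, ha, hb, hc⟩
    obtain ⟨o', ho1, ho2⟩ := pathN_split hc
    exact ⟨o', reach_iff_pathN.2 ⟨a, pathN_prod.2 ⟨ha, ho1⟩⟩,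
      reach_iff_pathN.2 ⟨b, pathN_prod.2 ⟨hb, ho2⟩⟩⟩

lemma mem_sccProjO {I O : Type*} {EI : I → I → Prop} {EO : O → O → Prop}
    {i : I} {o o' : O} :
    o' ∈ sccProjO EI EO (i, o) ↔
      ∃ a b, PathN EO a o o' ∧ PathN EO b o' o ∧ PathN EI (a + b) i i := by
  constructor
  · rintro ⟨i', h1, h2⟩
    rw [reach_iff_pathN] at h1 h2
    obtain ⟨a, ha⟩ := h1
    obtain ⟨b, hb⟩ := h2
    rw [pathN_prod] at ha hb
    exact ⟨a, b, ha.2, hb.2, pathN_comp ha.1 hb.1⟩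
  · rintro ⟨a, b, ha, hb, hc⟩
    obtain ⟨i', hi1, hi2⟩ := pathN_split hc
    exact ⟨i', reach_iff_pathN.2 ⟨a, pathN_prod.2 ⟨hi1, ha⟩⟩,
      reach_iff_pathN.2 ⟨b, pathN_prod.2 ⟨hi2, hb⟩⟩⟩

/-- Key lemma: if (i,o) has a product edge to (ii,o2) and there is a product path
of length e back from (ii,o2) to (i,o), then (i,o) and (i,o2) have the same SCC
projections. -/
lemma proj_shift {I O : Type*} {EI : I → I → Prop} {EO : O → O → Prop}
    {i ii : I} {o o2 : O} (hEI : EI i ii) (hEO : EO o o2) {e : ℕ}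
    (hIe : PathN EI e ii i) (hOe : PathN EO e o2 o) :
    sccProjI EI EO (i, o) = sccProjI EI EO (i, o2) ∧
    sccProjO EI EO (i, o) = sccProjO EI EO (i, o2) := by
  have cycI : PathN EI (e + 1) i i := by
    have := pathN_comp (pathN_one hEI) hIe
    exact pathN_cast (by omega) this
  constructor
  · ext i'
    rw [mem_sccProjI, mem_sccProjI]
    constructor
    · rintro ⟨a, b, ha, hb, hc⟩
      refine ⟨a, b + (e + 1), ha, pathN_comp hb cycI, ?_⟩
      have : PathN EO (e + (a + b) + 1) o2 o2 :=
        pathN_comp (pathN_comp hOe hc) (pathN_one hEO)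
      exact pathN_cast (by omega) this
    · rintro ⟨a, b, ha, hb, hc⟩
      refine ⟨a, b + (e + 1), ha, pathN_comp hb cycI, ?_⟩
      have : PathN EO (1 + (a + b) + e) o o :=
        pathN_comp (pathN_comp (pathN_one hEO) hc) hOe
      exact pathN_cast (by omega) this
  · ext o'
    rw [mem_sccProjO, mem_sccProjO]
    constructor
    · rintro ⟨a, b, ha, hb, hc⟩
      refine ⟨e + a, b + 1, pathN_comp hOe ha, pathN_comp hb (pathN_one hEO), ?_⟩
      have : PathN EI ((a + b) + (e + 1)) i i := pathN_comp hc cycI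
      exact pathN_cast (by omega) this
    · rintro ⟨a, b, ha, hb, hc⟩
      refine ⟨1 + a, b + e, pathN_comp (pathN_one hEO) ha, pathN_comp hb hOe, ?_⟩
      have : PathN EI ((a + b) + (e + 1)) i i := pathN_comp hc cycI
      exact pathN_cast (by omega) this

/-- The play shifted by one step: inputs delayed by one, outputs unchanged. -/
def shiftPlay {I O : Type*} (i0 : I) (o0 : O) (π : ℕ → I × O) : ℕ → I × O
  | 0 => (i0, o0)
  | (n+1) => ((π n).1, (π (n+1)).2)

lemma eventually_sameSCC {V : Type*} [Fintype V] (E : V → V → Prop) (π : ℕ → V)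
    (h : ∀ n, E (π n) (π (n + 1))) :
    ∃ N, ∀ m n, N ≤ m → N ≤ n → SameSCC E (π m) (π n) := by
  have hreach : ∀ m n, m ≤ n → Reach E (π m) (π n) := by
    intro m n hmn
    induction n, hmn using Nat.le_induction with
    | base => exact Relation.ReflTransGen.refl
    | succ n _ ih => exact Relation.ReflTransGen.tail ih (h n)
  set S : Set V := {v | {n | π n = v}.Infinite} with hS
  have hB : {n | π n ∉ S}.Finite := by
    have : {n | π n ∉ S} ⊆ ⋃ v ∈ {v : V | v ∉ S}, {n | π n = v} := by
      intro n hn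
      exact Set.mem_biUnion hn rfl
    refine Set.Finite.subset (Set.Finite.biUnion (Set.toFinite _) ?_) this
    intro v hv
    exact Set.not_infinite.1 hv
  obtain ⟨N₀, hN₀⟩ := hB.bddAbove
  refine ⟨N₀ + 1, ?_⟩
  have hmem : ∀ n, N₀ + 1 ≤ n → π n ∈ S := by
    intro n hn
    by_contra hc
    have := hN₀ hc
    omega
  have key : ∀ m n, N₀ + 1 ≤ m → N₀ + 1 ≤ n → Reach E (π m) (π n) := by
    intro m n hm hn
    have hinf : {k | π k = π n}.Infinite := hmem n hn
    obtain ⟨k, hk, hk2⟩ := hinf.exists_gt m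
    have := hreach m k (le_of_lt hk2)
    rwa [hk] at this
  exact fun m n hm hn => ⟨key m n hm hn, key n m hn hm⟩

lemma hist_getLast {I O : Type*} (π : ℕ → I × O) (n : ℕ) :
    (hist π n).getLast? = some (π n) := by
  have : hist π n = (List.range n).map π ++ [π n] := by simp [hist, List.range_succ]
  rw [this, List.getLast?_concat]

lemma zip_hist {I O : Type*} (i0 : I) (o0 : O) (π : ℕ → I × O) (h0 : (π 0).2 = o0)
    (n : ℕ) :
    (i0 :: ((hist π n).map Prod.fst).dropLast).zip ((hist π n).map Prod.snd)
      = hist (shiftPlay i0 o0 π) n := by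
  induction n with
  | zero => simp [hist, shiftPlay, h0, List.range_succ]
  | succ n ih =>
    have h1 : hist π (n + 1) = hist π n ++ [π (n + 1)] := by
      simp [hist, List.range_succ]
    have h2 : hist (shiftPlay i0 o0 π) (n + 1)
        = hist (shiftPlay i0 o0 π) n ++ [((π n).1, (π (n + 1)).2)] := by
      simp [hist, List.range_succ, shiftPlay]
    have h3 : (hist π n).map Prod.fst
        = ((hist π n).map Prod.fst).dropLast ++ [(π n).1] := by
      have : hist π n = (List.range n).map π ++ [π n] := by simp [hist, List.range_succ]
      rw [this]
      simp
    have hlen : (i0 :: ((hist π n).map Prod.fst).dropLast).length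
        = ((hist π n).map Prod.snd).length := by
      simp [hist]
    rw [h1, h2, ← ih]
    simp only [List.map_append, List.map_cons, List.map_nil, List.dropLast_concat]
    conv_lhs => rw [h3, ← List.cons_append]
    rw [List.zip_append hlen]
    rfl

/-- One-step delay lemma: in a separated weak Büchi game (acc is a union of SCCs of
the product graph and whether an SCC is accepting depends only on its two
projections), if (i0,i1) is an edge of G_I and f wins from (i0,o0), then the
delayed strategy wins from (i1,o0). -/
theorem one_step_delay {I O : Type*} [Fintype I] [Fintype O]
    (EI : I → I → Prop) (EO : O → O → Prop) (acc : I × O → Prop)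
    (hUnion : ∀ s t, SameSCC (prodEdge EI EO) s t → (acc s ↔ acc t))
    (hProj : ∀ s t, sccProjI EI EO s = sccProjI EI EO t →
      sccProjO EI EO s = sccProjO EI EO t → (acc s ↔ acc t))
    (i0 i1 : I) (o0 : O) (hEdge : EI i0 i1)
    (f : Strat I O) (hf : WinningFrom EI EO acc f (i0, o0)) :
    WinningFrom EI EO acc (delayed f i0) (i1, o0) := by
  intro π hcons henv
  obtain ⟨hπ0, hπs⟩ := hcons
  have h02 : (π 0).2 = o0 := by rw [hπ0]
  set π' := shiftPlay i0 o0 π with hπ'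
  have hsnd : ∀ n, (π' n).2 = (π n).2 := by
    intro n
    cases n with
    | zero => simpa [hπ', shiftPlay] using h02.symm
    | succ k => rfl
  have hcons' : Consistent f (i0, o0) π' := by
    refine ⟨rfl, ?_⟩
    intro n
    calc (π' (n + 1)).2 = (π (n + 1)).2 := rfl
      _ = delayed f i0 (hist π n) (π (n + 1)).1 := hπs n
      _ = f (hist π' n) (π n).1 := by
          unfold delayed
          rw [zip_hist i0 o0 π h02 n, hist_getLast]
          rfl
      _ = f (hist π' n) (π' (n + 1)).1 := rfl
  have henv' : EnvLegal EI π' := by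
    intro n
    cases n with
    | zero =>
      show EI i0 (π 0).1
      rw [hπ0]
      exact hEdge
    | succ k => exact henv k
  obtain ⟨hsys', hinf'⟩ := hf π' hcons' henv'
  have hsys : SysLegal EO π := by
    intro n
    have := hsys' n
    rwa [hsnd n, hsnd (n + 1)] at this
  refine ⟨hsys, ?_⟩
  have hedge : ∀ n, prodEdge EI EO (π n) (π (n + 1)) := fun n => ⟨henv n, hsys n⟩
  have hedge' : ∀ n, prodEdge EI EO (π' n) (π' (n + 1)) := fun n => ⟨henv' n, hsys' n⟩
  obtain ⟨N1, hN1⟩ := eventually_sameSCC (prodEdge EI EO) π hedge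
  obtain ⟨N2, hN2⟩ := eventually_sameSCC (prodEdge EI EO) π' hedge'
  set N := max N1 N2 with hN
  obtain ⟨m, hm, hmacc⟩ := hinf' N
  have hacc' : ∀ n, N ≤ n → acc (π' n) := by
    intro n hn
    have hscc := hN2 n m (le_trans (le_max_right N1 N2) hn)
      (le_trans (le_max_right N1 N2) hm)
    exact (hUnion _ _ hscc).2 hmacc
  have hacc : ∀ n, N ≤ n → acc (π n) := by
    intro n hn
    have hb : SameSCC (prodEdge EI EO) (π (n + 1)) (π n) :=
      hN1 (n + 1) n (le_trans (le_max_left N1 N2) (by omega))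
        (le_trans (le_max_left N1 N2) hn)
    obtain ⟨e, he⟩ := reach_iff_pathN.1 hb.1
    rw [pathN_prod] at he
    have hkey := proj_shift (henv n) (hsys n) he.1 he.2
    have heq : ((π n).1, (π n).2) = π n := Prod.mk.eta
    have ht : ((π n).1, (π (n + 1)).2) = π' (n + 1) := rfl
    have hiff := hProj (π n) (π' (n + 1))
      (by rw [← heq, ← ht]; exact hkey.1)
      (by rw [← heq, ← ht]; exact hkey.2)
    exact hiff.2 (hacc' (n + 1) (by omega))
  intro M
  exact ⟨max M N, le_max_left _ _, hacc _ (le_max_right _ _)⟩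
end

section
/- (Delay Property) In a separated weak Büchi game, let i0, ..., in be a path in the input graph G_I and o_{-m}, ..., o_0 a path in the output graph G_O. If the system can win from state (i0, o0), then the system can also win from state (i_n, o_{-m}). -/
open scoped Classical

/-! ### Auxiliary development: paths with explicit lengths -/

/-- Paths of a fixed length. -/
def PathLen {V : Type*} (E : V → V → Prop) : ℕ → V → V → Prop
  | 0 => fun u v => u = v
  | (n+1) => fun u v => ∃ w, E u w ∧ PathLen E n w v

lemma pathLen_zero {V : Type*} {E : V → V → Prop} {u v : V} : PathLen E 0 u v ↔ u = v := Iff.rfl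

lemma pathLen_cast {V : Type*} {E : V → V → Prop} {m n : ℕ} {u v : V}
    (h : PathLen E m u v) (e : m = n) : PathLen E n u v := e ▸ h

lemma PathLen.trans {V : Type*} {E : V → V → Prop} :
    ∀ {m : ℕ} {n : ℕ} {u v w : V}, PathLen E m u v → PathLen E n v w →
      PathLen E (m + n) u w := by
  intro m
  induction m with
  | zero =>
    intro n u v w h1 h2
    rw [pathLen_zero] at h1; subst h1
    exact pathLen_cast h2 (by omega)
  | succ k ih =>
    intro n u v w h1 h2
    obtain ⟨z, hz, h1'⟩ := h1
    have : PathLen E (k + n + 1) u w := ⟨z, hz, ih h1' h2⟩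
    exact pathLen_cast this (by omega)

lemma PathLen.iter {V : Type*} {E : V → V → Prop} {c : ℕ} {u : V}
    (h : PathLen E c u u) : ∀ α : ℕ, PathLen E (α * c) u u := by
  intro α
  induction α with
  | zero => exact pathLen_cast (pathLen_zero.mpr rfl) (by omega)
  | succ β ih => exact pathLen_cast (ih.trans h) (by ring)

lemma PathLen.split {V : Type*} {E : V → V → Prop} :
    ∀ {m n : ℕ} {u w : V}, PathLen E (m + n) u w →
      ∃ v, PathLen E m u v ∧ PathLen E n v w := by
  intro m
  induction m with
  | zero =>
    intro n u w h
    exact ⟨u, rfl, pathLen_cast h (by omega)⟩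
  | succ k ih =>
    intro n u w h
    have h' : PathLen E (k + n + 1) u w := pathLen_cast h (by omega)
    obtain ⟨z, hz, h''⟩ := h'
    obtain ⟨v, hv1, hv2⟩ := ih h''
    exact ⟨v, ⟨z, hz, hv1⟩, hv2⟩

lemma reach_iff_pathLen {V : Type*} {E : V → V → Prop} {u v : V} :
    Reach E u v ↔ ∃ n, PathLen E n u v := by
  constructor
  · intro h
    induction h with
    | refl => exact ⟨0, rfl⟩
    | tail _ e ih =>
      obtain ⟨n, hn⟩ := ih
      exact ⟨n + 1, hn.trans ⟨_, e, rfl⟩⟩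
  · rintro ⟨n, hn⟩
    induction n generalizing u with
    | zero => rw [pathLen_zero] at hn; subst hn; exact Relation.ReflTransGen.refl
    | succ k ih =>
      obtain ⟨w, hw, h⟩ := hn
      exact Relation.ReflTransGen.head hw (ih h)

lemma prod_pathLen {I O : Type*} {EI : I → I → Prop} {EO : O → O → Prop} :
    ∀ {n : ℕ} {a c : I} {b d : O},
      PathLen (prodEdge EI EO) n (a, b) (c, d) ↔ PathLen EI n a c ∧ PathLen EO n b d := by
  intro n
  induction n with
  | zero =>
    intro a c b d
    simp [pathLen_zero, Prod.ext_iff]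
  | succ k ih =>
    intro a c b d
    constructor
    · rintro ⟨⟨w1, w2⟩, ⟨he1, he2⟩, h⟩
      obtain ⟨h1, h2⟩ := ih.mp h
      exact ⟨⟨w1, he1, h1⟩, ⟨w2, he2, h2⟩⟩
    · rintro ⟨⟨w1, he1, h1⟩, ⟨w2, he2, h2⟩⟩
      exact ⟨(w1, w2), ⟨he1, he2⟩, ih.mpr ⟨h1, h2⟩⟩

lemma reach_prod_iff {I O : Type*} {EI : I → I → Prop} {EO : O → O → Prop}
    {a c : I} {b d : O} :
    Reach (prodEdge EI EO) (a, b) (c, d) ↔ ∃ n, PathLen EI n a c ∧ PathLen EO n b d := by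
  rw [reach_iff_pathLen]
  exact exists_congr fun n => prod_pathLen

lemma sameSCC_prod_iff {I O : Type*} {EI : I → I → Prop} {EO : O → O → Prop}
    {a c : I} {b d : O} :
    SameSCC (prodEdge EI EO) (a, b) (c, d) ↔
      (∃ n, PathLen EI n a c ∧ PathLen EO n b d) ∧
      (∃ n, PathLen EI n c a ∧ PathLen EO n d b) := by
  unfold SameSCC
  rw [reach_prod_iff, reach_prod_iff]

lemma play_pathLen {V : Type*} {E : V → V → Prop} {σ : ℕ → V}
    (h : ∀ t, E (σ t) (σ (t + 1))) : ∀ d t, PathLen E d (σ t) (σ (t + d)) := by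
  intro d
  induction d with
  | zero => intro t; rfl
  | succ k ih =>
    intro t
    refine ⟨σ (t + 1), h t, ?_⟩
    have := ih (t + 1)
    rwa [show t + 1 + k = t + (k + 1) by omega] at this

lemma pathLen_exists_fun {V : Type*} (E : V → V → Prop) :
    ∀ (n : ℕ) (u v : V), PathLen E n u v →
      ∃ c : ℕ → V, c 0 = u ∧ c n = v ∧ ∀ t, t < n → E (c t) (c (t + 1)) := by
  intro n
  induction n with
  | zero =>
    intro u v h
    rw [pathLen_zero] at h; subst h
    exact ⟨fun _ => u, rfl, rfl, by omega⟩
  | succ k ih =>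
    intro u v h
    obtain ⟨w, hw, h'⟩ := h
    obtain ⟨c', h0, hk, he⟩ := ih w v h'
    refine ⟨fun t => Nat.casesOn t u c', rfl, hk, ?_⟩
    intro t ht
    cases t with
    | zero => simpa [h0] using hw
    | succ s => exact he s (by omega)

/-! ### SCC projection invariance along a recurrent play -/

lemma projI_mono {I O : Type*} (EI : I → I → Prop) (EO : O → O → Prop)
    (x : ℕ → I) (y : ℕ → O)
    (hre : ∀ t t', ∃ d, 0 < d ∧ PathLen (prodEdge EI EO) d (x t, y t) (x t', y t'))
    (a b a' b' : ℕ) :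
    sccProjI EI EO (x a, y b) ⊆ sccProjI EI EO (x a', y b') := by
  rintro i' ⟨o', hscc⟩
  obtain ⟨⟨l1, hx1, hy1⟩, ⟨l2, hx2, hy2⟩⟩ := sameSCC_prod_iff.mp hscc
  obtain ⟨p1, hp1pos, hp1⟩ := hre a' a
  obtain ⟨p2, -, hp2⟩ := hre a a'
  obtain ⟨q1, hq1pos, hq1⟩ := hre b' b
  obtain ⟨q2, -, hq2⟩ := hre b b'
  have hp1x : PathLen EI p1 (x a') (x a) := (prod_pathLen.mp hp1).1
  have hp2x : PathLen EI p2 (x a) (x a') := (prod_pathLen.mp hp2).1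
  have hq1y : PathLen EO q1 (y b') (y b) := (prod_pathLen.mp hq1).2
  have hq2y : PathLen EO q2 (y b) (y b') := (prod_pathLen.mp hq2).2
  obtain ⟨pp, rfl⟩ : ∃ pp, p1 = pp + 1 := ⟨p1 - 1, by omega⟩
  obtain ⟨qq, rfl⟩ : ∃ qq, q1 = qq + 1 := ⟨q1 - 1, by omega⟩
  have xfwd : PathLen EI ((pp + 1) + l1) (x a') i' := hp1x.trans hx1
  have cycx : PathLen EI (p2 + (pp + 1)) (x a) (x a) := hp2x.trans hp1x
  have xback : PathLen EI (l2 + ((qq + q2) * (p2 + (pp + 1)) + p2)) i' (x a') :=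
    hx2.trans ((cycx.iter (qq + q2)).trans hp2x)
  have cycy : PathLen EO (q2 + (qq + 1)) (y b) (y b) := hq2y.trans hq1y
  have ycyc : PathLen EO ((qq + 1) + ((pp + p2) * (q2 + (qq + 1)) + (l1 + (l2 + q2))))
      (y b') (y b') :=
    hq1y.trans ((cycy.iter (pp + p2)).trans (hy1.trans (hy2.trans hq2y)))
  have ycyc' : PathLen EO (((pp + 1) + l1) + (l2 + ((qq + q2) * (p2 + (pp + 1)) + p2)))
      (y b') (y b') := pathLen_cast ycyc (by ring)
  obtain ⟨o'', ho1, ho2⟩ := PathLen.split ycyc'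
  exact ⟨o'', sameSCC_prod_iff.mpr ⟨⟨_, xfwd, ho1⟩, ⟨_, xback, ho2⟩⟩⟩

lemma sccProjO_swap {I O : Type*} (EI : I → I → Prop) (EO : O → O → Prop) (a : I) (b : O) :
    sccProjO EI EO (a, b) = sccProjI EO EI (b, a) := by
  ext o'
  constructor
  · rintro ⟨i', hscc⟩
    obtain ⟨⟨n1, h1, h2⟩, ⟨n2, h3, h4⟩⟩ := sameSCC_prod_iff.mp hscc
    exact ⟨i', sameSCC_prod_iff.mpr ⟨⟨n1, h2, h1⟩, ⟨n2, h4, h3⟩⟩⟩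
  · rintro ⟨i', hscc⟩
    obtain ⟨⟨n1, h1, h2⟩, ⟨n2, h3, h4⟩⟩ := sameSCC_prod_iff.mp hscc
    exact ⟨i', sameSCC_prod_iff.mpr ⟨⟨n1, h2, h1⟩, ⟨n2, h4, h3⟩⟩⟩

lemma exists_recurrent {S : Type*} [Fintype S] (σ : ℕ → S) :
    ∃ K, ∀ t, K ≤ t → ∀ N, ∃ t', N ≤ t' ∧ σ t' = σ t := by
  classical
  let Mf : S → ℕ := fun s => if h : ∃ M, ∀ u, M ≤ u → σ u ≠ s then h.choose else 0
  refine ⟨(Finset.univ : Finset S).sup Mf + 1, ?_⟩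
  intro t ht N
  by_contra hcon
  push_neg at hcon
  have hex : ∃ M, ∀ u, M ≤ u → σ u ≠ σ t := ⟨N, fun u hu => hcon u hu⟩
  have hMf : Mf (σ t) = hex.choose := dif_pos hex
  have hle : Mf (σ t) ≤ (Finset.univ : Finset S).sup Mf :=
    Finset.le_sup (Finset.mem_univ _)
  exact hex.choose_spec t (by omega) rfl

/-! ### The simulated play and the delayed strategy -/

/-- The simulated play: history list together with current state. -/
def simPlay {I O : Type*} (f : Strat I O) (o0 : O) (X : ℕ → I) : ℕ → List (I × O) × (I × O)
  | 0 => ([], (X 0, o0))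
  | t+1 =>
      let p := simPlay f o0 X t
      (p.1 ++ [p.2], (X (t+1), f (p.1 ++ [p.2]) (X (t+1))))

lemma hist_length {I O : Type*} (π : ℕ → I × O) (k : ℕ) : (hist π k).length = k + 1 := by
  simp [hist]

lemma hist_succ {I O : Type*} (π : ℕ → I × O) (k : ℕ) :
    hist π (k + 1) = hist π k ++ [π (k + 1)] := by
  simp [hist, List.range_succ]

lemma simPlay_fst {I O : Type*} (f : Strat I O) (o0 : O) (X : ℕ → I) (t : ℕ) :
    (simPlay f o0 X t).2.1 = X t := by
  cases t <;> rfl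

lemma simPlay_hist {I O : Type*} (f : Strat I O) (o0 : O) (X : ℕ → I) (t : ℕ) :
    hist (fun s => (simPlay f o0 X s).2) t = (simPlay f o0 X (t + 1)).1 := by
  induction t with
  | zero =>
    show List.map _ (List.range 1) = _
    simp [List.range_succ, simPlay]
  | succ k ih =>
    rw [hist_succ, ih]
    rfl

lemma simPlay_congr {I O : Type*} (f : Strat I O) (o0 : O) (X X' : ℕ → I) :
    ∀ t, (∀ s, s ≤ t → X s = X' s) → simPlay f o0 X t = simPlay f o0 X' t := by
  intro t
  induction t with
  | zero => intro h; simp [simPlay, h 0 le_rfl]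
  | succ k ih =>
    intro h
    have h1 := ih (fun s hs => h s (by omega))
    have h2 := h (k + 1) le_rfl
    simp [simPlay, h1, h2]

lemma hist_map_getD {I O : Type*} (π : ℕ → I × O) (k s : ℕ) (hs : s ≤ k) (d : I) :
    ((hist π k).map Prod.fst).getD s d = (π s).1 := by
  rw [List.getD_eq_getElem?_getD, List.getElem?_map]
  simp [hist, List.getElem?_map, List.getElem?_range (show s < k + 1 by omega)]

/-- The delayed strategy: follow the prescribed output path for the first `m` steps,
afterwards copy (with delay) the outputs of the original strategy `f` fed with the
prescribed input path followed by the actual inputs. -/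
def delayStrat {I O : Type*} (f : Strat I O) (o0 : O) (xs : ℕ → I) (op : ℕ → O)
    (n m : ℕ) (iN : I) : Strat I O :=
  fun h inew =>
    if h.length < m then op h.length
    else (simPlay f o0 (fun t => if t < n then xs t
        else if t - n = h.length then inew else (h.map Prod.fst).getD (t - n) iN)
        (h.length - m)).2.2

lemma delayStrat_eval {I O : Type*} (f : Strat I O) (o0 : O) (xs : ℕ → I) (op : ℕ → O)
    (n m : ℕ) (iN : I) (π : ℕ → I × O) (k : ℕ) (inew : I) (X : ℕ → I)
    (hX : ∀ t, t ≤ k + 1 - m → X t = if t < n then xs t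
        else if t - n = k + 1 then inew else (π (t - n)).1)
    (hkm : ¬ (k + 1 < m)) :
    delayStrat f o0 xs op n m iN (hist π k) inew = (simPlay f o0 X (k + 1 - m)).2.2 := by
  unfold delayStrat
  rw [hist_length, if_neg hkm]
  refine congrArg (fun p => p.2.2) (simPlay_congr f o0 _ X (k + 1 - m) ?_)
  intro s hs
  show (if s < n then xs s
      else if s - n = k + 1 then inew else ((hist π k).map Prod.fst).getD (s - n) iN) = X s
  rw [hX s hs]
  by_cases hsn : s < n
  · rw [if_pos hsn, if_pos hsn]
  · rw [if_neg hsn, if_neg hsn]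
    by_cases heq : s - n = k + 1
    · rw [if_pos heq, if_pos heq]
    · rw [if_neg heq, if_neg heq, hist_map_getD π k (s - n) (by omega) iN]

/-- Delay Property: in a separated weak Büchi game, if there is a path from i0 to
i_n in G_I and a path from o_{-m} to o0 in G_O, and the system can win from
(i0, o0), then the system can also win from (i_n, o_{-m}). -/
theorem delay_property {I O : Type*} [Fintype I] [Fintype O]
    (EI : I → I → Prop) (EO : O → O → Prop) (acc : I × O → Prop)
    (hUnion : ∀ s t, SameSCC (prodEdge EI EO) s t → (acc s ↔ acc t))
    (hProj : ∀ s t, sccProjI EI EO s = sccProjI EI EO t →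
      sccProjO EI EO s = sccProjO EI EO t → (acc s ↔ acc t))
    (i0 iN : I) (oM o0 : O)
    (hI : Reach EI i0 iN) (hO : Reach EO oM o0)
    (hwin : SysWins EI EO acc (i0, o0)) :
    SysWins EI EO acc (iN, oM) := by
  classical
  obtain ⟨f, hf⟩ := hwin
  obtain ⟨n, hn⟩ := reach_iff_pathLen.mp hI
  obtain ⟨m, hm⟩ := reach_iff_pathLen.mp hO
  obtain ⟨xs, hxs0, hxsn, hxse⟩ := pathLen_exists_fun EI n i0 iN hn
  obtain ⟨op, hop0, hopm, hope⟩ := pathLen_exists_fun EO m oM o0 hm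
  refine ⟨delayStrat f o0 xs op n m iN, ?_⟩
  intro π hcons henv
  obtain ⟨hπ0, hπs⟩ := hcons
  have hJ0 : (π 0).1 = iN := by rw [hπ0]
  -- the simulated input sequence
  set Xr : ℕ → I := fun t => if t < n then xs t else (π (t - n)).1 with hXrdef
  -- the simulated play is a legal play for the environment
  have hXred : ∀ t, EI (Xr t) (Xr (t + 1)) := by
    intro t
    rcases lt_trichotomy (t + 1) n with h | h | h
    · have ht : t < n := by omega
      simp only [hXrdef, if_pos ht, if_pos h]
      exact hxse t ht
    · have ht : t < n := by omega
      simp only [hXrdef]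
      rw [if_pos ht, if_neg (show ¬ (t + 1 < n) by omega),
        show t + 1 - n = 0 by omega, hJ0, ← hxsn, ← h]
      exact hxse t ht
    · have ht : ¬ (t < n) := by omega
      simp only [hXrdef, if_neg ht, if_neg (show ¬ (t + 1 < n) by omega)]
      rw [show t + 1 - n = (t - n) + 1 by omega]
      exact henv (t - n)
  have hx0 : Xr 0 = i0 := by
    by_cases h0 : 0 < n
    · simp only [hXrdef, if_pos h0]
      exact hxs0
    · have hn0 : n = 0 := by omega
      subst hn0
      have hi : i0 = iN := pathLen_zero.mp hn
      simp only [hXrdef, if_neg (by omega : ¬ (0 < 0))]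
      rw [hi]
      exact hJ0
  -- consistency of the simulated play with f
  have hσcons : Consistent f (i0, o0) (fun t => (simPlay f o0 Xr t).2) := by
    constructor
    · show (Xr 0, o0) = (i0, o0)
      rw [hx0]
    · intro t
      show (simPlay f o0 Xr (t + 1)).2.2
          = f (hist (fun s => (simPlay f o0 Xr s).2) t) (simPlay f o0 Xr (t + 1)).2.1
      rw [simPlay_hist f o0 Xr t]
      rfl
  have hσenv : EnvLegal EI (fun t => (simPlay f o0 Xr t).2) := by
    intro t
    show EI (simPlay f o0 Xr t).2.1 (simPlay f o0 Xr (t + 1)).2.1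
    rw [simPlay_fst, simPlay_fst]
    exact hXred t
  obtain ⟨hsysσ, hinfσ⟩ := hf (fun t => (simPlay f o0 Xr t).2) hσcons hσenv
  -- the outputs of the real play
  have hout : ∀ k, (π k).2 = if k < m then op k else (simPlay f o0 Xr (k - m)).2.2 := by
    intro k
    cases k with
    | zero =>
      by_cases h0 : 0 < m
      · rw [if_pos h0, hπ0, hop0]
      · have hm0 : m = 0 := by omega
        subst hm0
        have hoo : oM = o0 := pathLen_zero.mp hm
        rw [if_neg (by omega), hπ0]
        show oM = (simPlay f o0 Xr 0).2.2
        rw [hoo]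
        rfl
    | succ k =>
      rw [hπs k]
      by_cases hkm : k + 1 < m
      · rw [if_pos hkm]
        show delayStrat f o0 xs op n m iN (hist π k) (π (k + 1)).1 = op (k + 1)
        unfold delayStrat
        rw [hist_length, if_pos hkm]
      · rw [if_neg hkm]
        refine delayStrat_eval f o0 xs op n m iN π k ((π (k + 1)).1) Xr ?_ hkm
        intro t ht
        simp only [hXrdef]
        by_cases htn : t < n
        · rw [if_pos htn, if_pos htn]
        · rw [if_neg htn, if_neg htn]
          by_cases heq : t - n = k + 1
          · rw [if_pos heq, heq]
          · rw [if_neg heq]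
  -- the real play has legal system moves
  have hsysπ : SysLegal EO π := by
    intro k
    rw [hout k, hout (k + 1)]
    by_cases h1 : k + 1 < m
    · rw [if_pos (show k < m by omega), if_pos h1]
      exact hope k (by omega)
    · rw [if_neg h1]
      by_cases h2 : k < m
      · -- k + 1 = m
        rw [if_pos h2]
        have he : (simPlay f o0 Xr (k + 1 - m)).2.2 = o0 := by
          rw [show k + 1 - m = 0 by omega]
          rfl
        rw [he, ← hopm, show m = k + 1 by omega]
        exact hope k h2
      · rw [if_neg h2]
        have h3 := hsysσ (k - m)
        rw [show k + 1 - m = k - m + 1 by omega]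
        exact h3
  refine ⟨hsysπ, ?_⟩
  -- acceptance infinitely often
  obtain ⟨K, hK⟩ := exists_recurrent (fun t => (simPlay f o0 Xr t).2)
  obtain ⟨c, hcK, hacc⟩ := hinfσ K
  have hedge : ∀ t, prodEdge EI EO ((simPlay f o0 Xr t).2) ((simPlay f o0 Xr (t + 1)).2) := by
    intro t
    refine ⟨?_, hsysσ t⟩
    rw [simPlay_fst, simPlay_fst]
    exact hXred t
  have hreK : ∀ t t', K ≤ t → K ≤ t' → ∃ d, 0 < d ∧
      PathLen (prodEdge EI EO) d ((simPlay f o0 Xr t).2) ((simPlay f o0 Xr t').2) := by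
    intro t t' ht ht'
    obtain ⟨t'', ht''1, ht''2⟩ := hK t' ht' (t + 1)
    refine ⟨t'' - t, by omega, ?_⟩
    have hp := play_pathLen (σ := fun u => (simPlay f o0 Xr u).2) hedge (t'' - t) t
    rw [show t + (t'' - t) = t'' by omega] at hp
    rwa [ht''2] at hp
  intro N
  refine ⟨max N (K + m), le_max_left _ _, ?_⟩
  set k := max N (K + m) with hkdef
  have hk1 : K + m ≤ k := le_max_right _ _
  set xsh : ℕ → I := fun t => (simPlay f o0 Xr (K + t)).2.1 with hxshdef
  set ysh : ℕ → O := fun t => (simPlay f o0 Xr (K + t)).2.2 with hyshdef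
  have hpair : ∀ t, ((xsh t, ysh t) : I × O) = (simPlay f o0 Xr (K + t)).2 := fun t => rfl
  have hre : ∀ t t', ∃ d, 0 < d ∧
      PathLen (prodEdge EI EO) d (xsh t, ysh t) (xsh t', ysh t') := by
    intro t t'
    obtain ⟨d, hd, hp⟩ := hreK (K + t) (K + t') (by omega) (by omega)
    exact ⟨d, hd, by rw [hpair, hpair]; exact hp⟩
  have hre' : ∀ t t', ∃ d, 0 < d ∧
      PathLen (prodEdge EO EI) d (ysh t, xsh t) (ysh t', xsh t') := by
    intro t t'
    obtain ⟨d, hd, hp⟩ := hre t t'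
    obtain ⟨h1, h2⟩ := prod_pathLen.mp hp
    exact ⟨d, hd, prod_pathLen.mpr ⟨h2, h1⟩⟩
  have hπk : π k = (xsh (n + k - K), ysh (k - m - K)) := by
    have h1 : xsh (n + k - K) = (π k).1 := by
      simp only [hxshdef]
      rw [show K + (n + k - K) = n + k by omega, simPlay_fst]
      simp only [hXrdef, if_neg (show ¬ (n + k < n) by omega)]
      rw [show n + k - n = k by omega]
    have h2 : ysh (k - m - K) = (π k).2 := by
      simp only [hyshdef]
      rw [show K + (k - m - K) = k - m by omega]
      rw [hout k, if_neg (show ¬ (k < m) by omega)]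
    rw [h1, h2]
  have hσc : (simPlay f o0 Xr c).2 = (xsh (c - K), ysh (c - K)) := by
    rw [hpair (c - K), show K + (c - K) = c by omega]
  have hPI : sccProjI EI EO (π k) = sccProjI EI EO ((simPlay f o0 Xr c).2) := by
    rw [hπk, hσc]
    exact Set.Subset.antisymm
      (projI_mono EI EO xsh ysh hre _ _ _ _)
      (projI_mono EI EO xsh ysh hre _ _ _ _)
  have hPO : sccProjO EI EO (π k) = sccProjO EI EO ((simPlay f o0 Xr c).2) := by
    rw [hπk, hσc, sccProjO_swap, sccProjO_swap]
    exact Set.Subset.antisymm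
      (projI_mono EO EI ysh xsh hre' _ _ _ _)
      (projI_mono EO EI ysh xsh hre' _ _ _ _)
  exact (hProj (π k) ((simPlay f o0 Xr c).2) hPI hPO).mpr hacc
end

section
/- Completeness for separated GR(k): if a state s is not in the system's winning region of the weak Büchi game (GS, GF(acc)), then the system has no winning strategy for the separated GR(k) game (GS, φ) from s; i.e., the environment can force the play to converge to a non-accepting SCC and, within it, satisfy all assumptions of some φ_l whose guarantees cannot all be satisfied there. -/
/-!
From a winning strategy `f` for the GR(k) game the system obtains one for the Büchi game by
simulation: `f` is run on a virtual play whose inputs are the real ones with, after each of them,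
a closed walk through its whole strongly connected component in the input graph inserted, and
whose outputs are the real ones. The virtual input at time `n` depends only on the real inputs up
to time `n`, so this is a genuine strategy, and the virtual play is consistent with `f`.

A state `q` visited infinitely often by the real play is then accepting. Otherwise some conjunct
`l` has each of its assumptions met somewhere in the input projection of the SCC of `q`; the
inserted walks meet them infinitely often, so `f` must meet every guarantee of `l` infinitely
often. But from the first visit of `q` on the real play stays in the SCC of `q`, in whose output
projection some guarantee of `l` is never met.
-/

open scoped Classical

/-- A play satisfies the GR(k) formula
`⋀_l (⋀_i GF a_{l,i} → ⋀_j GF g_{l,j})`, with assumptions over inputs and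
guarantees over outputs. -/
def SatGRk {I O : Type*} {k : ℕ} {nl ml : Fin k → ℕ}
    (a : ∀ l : Fin k, Fin (nl l) → I → Prop)
    (g : ∀ l : Fin k, Fin (ml l) → O → Prop) (π : ℕ → I × O) : Prop :=
  ∀ l, (∀ i, InfOften (fun p : I × O => a l i p.1) π) →
    (∀ j, InfOften (fun p : I × O => g l j p.2) π)

/-- A state is accepting: for every conjunct `l`, either every guarantee is satisfied
somewhere in the output projection of its SCC, or some assumption is satisfied
nowhere in the input projection of its SCC. -/
def AcceptingSt {I O : Type*} {k : ℕ} {nl ml : Fin k → ℕ}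
    (EI : I → I → Prop) (EO : O → O → Prop)
    (a : ∀ l : Fin k, Fin (nl l) → I → Prop)
    (g : ∀ l : Fin k, Fin (ml l) → O → Prop) (s : I × O) : Prop :=
  ∀ l, (∀ j, ∃ o' ∈ sccProjO EI EO s, g l j o') ∨
    (∃ ii, ∀ i' ∈ sccProjI EI EO s, ¬ a l ii i')

/-- The system wins the separated GR(k) game from `s`. -/
def WinsGRk {I O : Type*} {k : ℕ} {nl ml : Fin k → ℕ}
    (EI : I → I → Prop) (EO : O → O → Prop)
    (a : ∀ l : Fin k, Fin (nl l) → I → Prop)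
    (g : ∀ l : Fin k, Fin (ml l) → O → Prop) (s : I × O) : Prop :=
  ∃ f : Strat I O, ∀ π : ℕ → I × O, Consistent f s π → EnvLegal EI π →
    SysLegal EO π ∧ SatGRk a g π

section Walks

variable {α : Type*} {r : α → α → Prop} {x y z : α} {w w₁ w₂ : List α}

/-- `IsWalk r x w y`: the list `w` enumerates, after `x`, the vertices of an `r`-walk from `x`
to `y`. -/
def IsWalk (r : α → α → Prop) (x : α) (w : List α) (y : α) : Prop :=
  List.IsChain r (x :: w) ∧ (x :: w).getLast (List.cons_ne_nil x w) = y

lemma exists_isWalk_of_reach (h : Reach r x y) : ∃ w, IsWalk r x w y :=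
  List.exists_isChain_cons_of_relationReflTransGen h

lemma IsWalk.target_mem (h : IsWalk r x w y) : y ∈ x :: w :=
  h.2 ▸ List.getLast_mem _

lemma IsWalk.append (h₁ : IsWalk r x w₁ y) (h₂ : IsWalk r y w₂ z) :
    IsWalk r x (w₁ ++ w₂) z := by
  refine ⟨?_, ?_⟩
  · rw [← List.cons_append]
    refine h₁.1.append h₂.1.tail fun a ha b hb => ?_
    rw [List.getLast?_eq_some_getLast (List.cons_ne_nil x w₁), h₁.2, Option.mem_some_iff] at ha
    exact ha ▸ h₂.1.rel_head? hb
  · rcases w₂.eq_nil_or_concat with rfl | ⟨L, b, rfl⟩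
    · obtain rfl : y = z := by simpa using h₂.2
      simpa using h₁.2
    · simpa using h₂.2

lemma exists_closed_isWalk_covering [Finite α] (r : α → α → Prop) (x : α) :
    ∃ w, IsWalk r x w x ∧ ∀ y, SameSCC r x y → y ∈ x :: w := by
  obtain ⟨L, -, hL⟩ := Finite.exists_univ_list α
  suffices ∀ L : List α, ∃ w, IsWalk r x w x ∧ ∀ y ∈ L, SameSCC r x y → y ∈ x :: w by
    obtain ⟨w, hw, hcov⟩ := this L
    exact ⟨w, hw, fun y => hcov y (hL y)⟩
  intro L
  induction L with
  | nil => exact ⟨[], ⟨.singleton x, rfl⟩, by simp⟩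
  | cons y L ih =>
    obtain ⟨w, hw, hcov⟩ := ih
    by_cases hy : SameSCC r x y
    · obtain ⟨w₁, hw₁⟩ := exists_isWalk_of_reach hy.1
      obtain ⟨w₂, hw₂⟩ := exists_isWalk_of_reach hy.2
      refine ⟨w₁ ++ w₂ ++ w, (hw₁.append hw₂).append hw, ?_⟩
      rintro z (_ | ⟨_, hz⟩) hxz
      · rcases List.mem_cons.mp hw₁.target_mem with h | h <;> simp [h]
      · rcases List.mem_cons.mp (hcov z hz hxz) with h | h <;> simp [h]
    · refine ⟨w, hw, ?_⟩
      rintro z (_ | ⟨_, hz⟩) hxz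
      · exact absurd hxz hy
      · exact hcov z hz hxz

end Walks

section Detour

variable {α : Type*} (W : α → List α) (μ : ℕ → α)

/-- The state of the walk `detour W μ` below: the current vertex, the index `m` of the current
block `μ m :: W (μ m)`, and the vertices of that block still to be visited. -/
structure DetourState (α : Type*) where
  vertex : α
  block : ℕ
  pending : List α

def detourStep : DetourState α → DetourState α
  | ⟨_, m, y :: rest⟩ => ⟨y, m, rest⟩
  | ⟨_, m, []⟩ => ⟨μ (m + 1), m + 1, W (μ (m + 1))⟩

def detourState : ℕ → DetourState α
  | 0 => ⟨μ 0, 0, W (μ 0)⟩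
  | n + 1 => detourStep W μ (detourState n)

/-- The sequence `μ 0, W (μ 0), μ 1, W (μ 1), …`: each `μ m` followed by the detour `W (μ m)`. -/
def detour (n : ℕ) : α := (detourState W μ n).vertex

variable {W μ}

lemma detourState_block_le (n : ℕ) : (detourState W μ n).block ≤ n := by
  induction n with
  | zero => rfl
  | succ n ih =>
    simp only [detourState]
    rcases h : detourState W μ n with ⟨v, m, _ | ⟨y, rest⟩⟩ <;>
      simp only [h, detourStep] at ih ⊢ <;> omega

lemma detourState_congr {μ' : ℕ → α} {n : ℕ} (h : ∀ k ≤ n, μ k = μ' k) :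
    detourState W μ n = detourState W μ' n := by
  induction n with
  | zero => simp only [detourState, h 0 le_rfl]
  | succ n ih =>
    have hblock := detourState_block_le (W := W) (μ := μ) n
    simp only [detourState, ← ih fun k hk => h k (by omega)]
    rcases hS : detourState W μ n with ⟨v, m, _ | ⟨y, rest⟩⟩
    · simp only [hS] at hblock
      simp only [detourStep, h (m + 1) (by omega)]
    · rfl

lemma detour_congr {μ' : ℕ → α} {n : ℕ} (h : ∀ k ≤ n, μ k = μ' k) :
    detour W μ n = detour W μ' n := by
  rw [detour, detour, detourState_congr h]

lemma isWalk_detourState {r : α → α → Prop} (hW : ∀ x, IsWalk r x (W x) x) (n : ℕ) :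
    IsWalk r (detourState W μ n).vertex (detourState W μ n).pending
      (μ (detourState W μ n).block) := by
  induction n with
  | zero => exact hW (μ 0)
  | succ n ih =>
    simp only [detourState]
    rcases hS : detourState W μ n with ⟨v, m, _ | ⟨y, rest⟩⟩
    · exact hW (μ (m + 1))
    · simp only [hS] at ih
      exact ⟨ih.1.tail, by simpa [detourStep] using ih.2⟩

lemma detour_rel {r : α → α → Prop} (hW : ∀ x, IsWalk r x (W x) x)
    (hμ : ∀ n, r (μ n) (μ (n + 1))) (n : ℕ) : r (detour W μ n) (detour W μ (n + 1)) := by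
  have hwalk := isWalk_detourState hW (μ := μ) n
  simp only [detour, detourState]
  rcases hS : detourState W μ n with ⟨v, m, _ | ⟨y, rest⟩⟩ <;> simp only [hS] at hwalk
  · obtain rfl : v = μ m := by simpa using hwalk.2
    exact hμ m
  · exact hwalk.1.rel

lemma detourState_succ_of_pending_eq_cons {n : ℕ} {y : α} {rest : List α}
    (h : (detourState W μ n).pending = y :: rest) :
    detourState W μ (n + 1) = ⟨y, (detourState W μ n).block, rest⟩ := by
  rcases hS : detourState W μ n with ⟨v, m, p⟩
  simp only [hS] at h
  simp [detourState, hS, h, detourStep]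

lemma detourState_add_length {n : ℕ} {p : List α} (h : (detourState W μ n).pending = p) :
    (detourState W μ (n + p.length)).pending = [] ∧
      (detourState W μ (n + p.length)).block = (detourState W μ n).block := by
  induction p generalizing n with
  | nil => simp [h]
  | cons y rest ih =>
    have hS := detourState_succ_of_pending_eq_cons h
    have := ih (n := n + 1) (by rw [hS])
    rw [hS] at this
    simpa [Nat.add_right_comm, Nat.add_assoc, Nat.add_comm 1] using this

lemma exists_detourState_eq (m : ℕ) : ∃ n, detourState W μ n = ⟨μ m, m, W (μ m)⟩ := by
  induction m with
  | zero => exact ⟨0, rfl⟩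
  | succ m ih =>
    obtain ⟨n, hn⟩ := ih
    obtain ⟨hnil, hblock⟩ := detourState_add_length (congrArg DetourState.pending hn)
    refine ⟨n + (W (μ m)).length + 1, ?_⟩
    rcases hS : detourState W μ (n + (W (μ m)).length) with ⟨v, m', p⟩
    simp only [hS, hn] at hnil hblock
    simp [detourState, hS, hnil, hblock, detourStep]

lemma exists_detour_eq_of_mem_pending {n : ℕ} {y : α} (hy : y ∈ (detourState W μ n).pending) :
    ∃ n', n < n' ∧ detour W μ n' = y := by
  generalize hp : (detourState W μ n).pending = p at hy
  induction p generalizing n with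
  | nil => simp at hy
  | cons z rest ih =>
    have hS := detourState_succ_of_pending_eq_cons hp
    rcases List.mem_cons.mp hy with rfl | hy
    · exact ⟨n + 1, n.lt_succ_self, by simp [detour, hS]⟩
    · obtain ⟨n', hn', hy'⟩ := ih (by rw [hS]) hy
      exact ⟨n', by omega, hy'⟩

lemma exists_detour_eq {m : ℕ} {y : α} (hy : y ∈ μ m :: W (μ m)) :
    ∃ n, m ≤ n ∧ detour W μ n = y := by
  obtain ⟨n, hn⟩ := exists_detourState_eq (W := W) (μ := μ) m
  have hm : m ≤ n := by simpa [hn] using detourState_block_le (W := W) (μ := μ) n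
  rcases List.mem_cons.mp hy with rfl | hy
  · exact ⟨n, hm, by simp [detour, hn]⟩
  · obtain ⟨n', hn', hy'⟩ := exists_detour_eq_of_mem_pending (n := n) (by rwa [hn])
    exact ⟨n', by omega, hy'⟩

end Detour

section Plays

variable {V : Type*} {P Q : V → Prop} {π : ℕ → V}

lemma InfOften.mono (h : InfOften P π) (hPQ : ∀ v, P v → Q v) : InfOften Q π :=
  fun N => (h N).imp fun _ hn => ⟨hn.1, hPQ _ hn.2⟩

lemma exists_infOften_eq [Finite V] (π : ℕ → V) : ∃ q, InfOften (· = q) π := by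
  obtain ⟨q, hq⟩ := Finite.exists_infinite_fiber π
  refine ⟨q, fun N => ?_⟩
  have hfreq : ∃ᶠ n in Filter.atTop, π n = q :=
    Nat.frequently_atTop_iff_infinite.mpr (Set.infinite_coe_iff.mp hq)
  exact Filter.frequently_atTop.mp hfreq N

variable {E : V → V → Prop}

lemma reach_of_le (hπ : ∀ n, E (π n) (π (n + 1))) {m n : ℕ} (hmn : m ≤ n) :
    Reach E (π m) (π n) := by
  induction n, hmn using Nat.le_induction with
  | base => exact .refl
  | succ n _ ih => exact ih.tail (hπ n)

lemma sameSCC_of_infOften (hπ : ∀ n, E (π n) (π (n + 1))) {q : V} (hq : InfOften (· = q) π)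
    {n₀ n : ℕ} (h₀ : π n₀ = q) (hn : n₀ ≤ n) : SameSCC E q (π n) := by
  obtain ⟨m, hnm, rfl⟩ := hq n
  exact ⟨h₀ ▸ reach_of_le hπ hn, reach_of_le hπ hnm⟩

lemma SameSCC.fst {I O : Type*} {EI : I → I → Prop} {EO : O → O → Prop} {p q : I × O}
    (h : SameSCC (prodEdge EI EO) p q) : SameSCC EI p.1 q.1 :=
  ⟨h.1.lift Prod.fst fun _ _ e => e.1, h.2.lift Prod.fst fun _ _ e => e.1⟩

end Plays

section Simulation

/-- A closed walk from `x` through every vertex of its strongly connected component. -/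
noncomputable def sweep {α : Type*} [Finite α] (r : α → α → Prop) (x : α) : List α :=
  (exists_closed_isWalk_covering r x).choose

lemma isWalk_sweep {α : Type*} [Finite α] {r : α → α → Prop} (x : α) :
    IsWalk r x (sweep r x) x :=
  (exists_closed_isWalk_covering r x).choose_spec.1

lemma mem_sweep {α : Type*} [Finite α] {r : α → α → Prop} {x y : α} (h : SameSCC r x y) :
    y ∈ x :: sweep r x :=
  (exists_closed_isWalk_covering r x).choose_spec.2 y h

variable {I O : Type*} [Finite I] (EI : I → I → Prop)

/-- The play shown to a GR(k) strategy when simulating it: the inputs are the real ones with a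
sweep of the input component of each inserted after it, the outputs are the real ones. -/
noncomputable def virtualPlay (π : ℕ → I × O) (n : ℕ) : I × O :=
  (detour (sweep EI) (fun j => (π j).1) n, (π n).2)

/-- Answers as `f` does on the virtual play of the history extended by the new input; the output
`s.2` paired with that input is a placeholder that `f` never reads. -/
noncomputable def simStrat (f : Strat I O) (s : I × O) : Strat I O := fun h i =>
  let ρ := virtualPlay EI fun j => (h ++ [(i, s.2)]).getD j s
  f ((List.range h.length).map ρ) (ρ h.length).1

variable {EI}

lemma simStrat_hist (f : Strat I O) (s : I × O) (π : ℕ → I × O) (n : ℕ) :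
    simStrat EI f s (hist π n) (π (n + 1)).1 =
      f (hist (virtualPlay EI π) n) (virtualPlay EI π (n + 1)).1 := by
  set ρ : ℕ → I × O := fun j => (hist π n ++ [((π (n + 1)).1, s.2)]).getD j s
  have hlen : (hist π n).length = n + 1 := by simp [hist]
  have hρ : ∀ j ≤ n, ρ j = π j := fun j hj => by
    simp only [ρ, List.getD_append _ _ _ _ (show j < (hist π n).length by omega),
      List.getD_eq_getElem _ _ (show j < (hist π n).length by omega)]
    simp [hist]
  have hρ_fst : ∀ j ≤ n + 1, (ρ j).1 = (π j).1 := fun j hj => by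
    rcases Nat.lt_or_ge j (n + 1) with hj' | hj'
    · rw [hρ j (by omega)]
    · obtain rfl : j = n + 1 := by omega
      simp [ρ, hlen]
  have hvirt : ∀ j ≤ n, virtualPlay EI ρ j = virtualPlay EI π j := fun j hj =>
    Prod.ext (detour_congr fun k hk => hρ_fst k (by omega)) (congrArg Prod.snd (hρ j hj) :)
  simp only [simStrat, hlen]
  congr 1
  · exact List.map_congr_left fun j hj => hvirt j (Nat.lt_succ_iff.mp (List.mem_range.mp hj))
  · exact detour_congr hρ_fst

lemma Consistent.virtualPlay {f : Strat I O} {s : I × O} {π : ℕ → I × O}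
    (h : Consistent (simStrat EI f s) s π) : Consistent f s (virtualPlay EI π) :=
  ⟨h.1, fun n => (h.2 n).trans (simStrat_hist f s π n)⟩

lemma sysLegal_virtualPlay_iff {EO : O → O → Prop} {π : ℕ → I × O} :
    SysLegal EO (virtualPlay EI π) ↔ SysLegal EO π :=
  Iff.rfl

lemma EnvLegal.virtualPlay {π : ℕ → I × O} (h : EnvLegal EI π) :
    EnvLegal EI (virtualPlay EI π) :=
  detour_rel isWalk_sweep h

lemma infOften_virtualPlay_fst_eq {π : ℕ → I × O} {q : I × O} (hq : InfOften (· = q) π) {i : I}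
    (hi : SameSCC EI q.1 i) : InfOften (fun p : I × O => p.1 = i) (virtualPlay EI π) := by
  intro N
  obtain ⟨m, hNm, rfl⟩ := hq N
  obtain ⟨n, hmn, hn⟩ := exists_detour_eq (μ := fun j => (π j).1) (mem_sweep hi)
  exact ⟨n, hNm.trans hmn, hn⟩

end Simulation

lemma acceptingSt_of_infOften {I O : Type*} [Finite I] {EI : I → I → Prop} {EO : O → O → Prop}
    {k : ℕ} {nl ml : Fin k → ℕ} {a : ∀ l : Fin k, Fin (nl l) → I → Prop}
    {g : ∀ l : Fin k, Fin (ml l) → O → Prop} {π : ℕ → I × O} {q : I × O}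
    (hπ : ∀ n, prodEdge EI EO (π n) (π (n + 1))) (hq : InfOften (· = q) π)
    (hsat : SatGRk a g (virtualPlay EI π)) : AcceptingSt EI EO a g q := by
  intro l
  by_contra! ⟨⟨j, hj⟩, hassm⟩
  have hassm_inf : ∀ i, InfOften (fun p : I × O => a l i p.1) (virtualPlay EI π) := fun i => by
    obtain ⟨x, ⟨_, hx⟩, hax⟩ := hassm i
    exact (infOften_virtualPlay_fst_eq hq hx.fst).mono fun p hp => hp ▸ hax
  obtain ⟨n₀, -, h₀⟩ := hq 0
  obtain ⟨n, hn, hgn⟩ := hsat l hassm_inf j n₀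
  exact hj (π n).2 ⟨(π n).1, sameSCC_of_infOften hπ hq h₀ hn⟩ hgn

/-- Completeness for separated GR(k): if a state is not in the system's winning
region of the weak Büchi game GF(acc) (acc being the union of accepting SCCs
determined by the GR(k) formula), then the system has no winning strategy for the
separated GR(k) game from that state. -/
theorem grk_completeness {I O : Type*} [Fintype I] [Fintype O]
    {k : ℕ} {nl ml : Fin k → ℕ}
    (EI : I → I → Prop) (EO : O → O → Prop)
    (a : ∀ l : Fin k, Fin (nl l) → I → Prop)
    (g : ∀ l : Fin k, Fin (ml l) → O → Prop)
    (s : I × O)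
    (h : ¬ SysWins EI EO (AcceptingSt EI EO a g) s) :
    ¬ WinsGRk EI EO a g s := by
  rintro ⟨f, hf⟩
  refine h ⟨simStrat EI f s, fun π hcons henv => ?_⟩
  obtain ⟨hsys, hsat⟩ := hf _ hcons.virtualPlay henv.virtualPlay
  obtain ⟨q, hq⟩ := exists_infOften_eq π
  have hacc := acceptingSt_of_infOften (fun n => ⟨henv n, hsys n⟩) hq hsat
  exact ⟨sysLegal_virtualPlay_iff.mp hsys, hq.mono fun _ hp => hp ▸ hacc⟩
end

section
/- Characterization of play satisfaction for GR(k) via SCC convergence: let π be an infinite play in a separated game structure and φ a GR(k) formula; if π converges to an accepting SCC S and, for every l such that all guarantees of φ_l are satisfiable in the output projection of S, π satisfies GF(g_{l,j}) for all j, then π ⊨ φ. -/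
open scoped Classical

/-- If a play converges to an accepting SCC S and, for every conjunct l all of whose
guarantees are satisfiable in the output projection of S, the play satisfies
GF(g_{l,j}) for all j, then the play satisfies the GR(k) formula φ. -/
theorem play_sat_grk_of_accepting_scc {I O : Type*}
    {k : ℕ} {nl ml : Fin k → ℕ}
    (EI : I → I → Prop) (EO : O → O → Prop)
    (a : ∀ l : Fin k, Fin (nl l) → I → Prop)
    (g : ∀ l : Fin k, Fin (ml l) → O → Prop)
    (π : ℕ → I × O) (S : Set (I × O))
    (hS : ∃ s0, S = {t | SameSCC (prodEdge EI EO) s0 t})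
    (hAcc : ∀ l, (∀ j, ∃ p ∈ S, g l j p.2) ∨ (∃ ii, ∀ p ∈ S, ¬ a l ii p.1))
    (hconv : ∃ N, ∀ n, N ≤ n → π n ∈ S)
    (hg : ∀ l, (∀ j, ∃ p ∈ S, g l j p.2) →
      ∀ j, InfOften (fun p : I × O => g l j p.2) π) :
    SatGRk a g π := by
  intro l hAss j
  rcases hAcc l with h | ⟨ii, hii⟩
  · exact hg l h j
  · exfalso
    obtain ⟨N, hN⟩ := hconv
    obtain ⟨n, hn, han⟩ := hAss ii N
    exact hii (π n) (hN n hn) han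
end

section
/- If an infinite play converges to a non-accepting SCC S and visits every assumption state-set of the violating conjunct infinitely often, then the play violates φ: specifically, if S is non-accepting, there exists a conjunct l such that every assumption a_{l,i} is satisfied by some state of the input projection of S while some guarantee g_{l,j} is satisfied by no state of the output projection of S; any play converging to S that satisfies GF(a_{l,i}) for all i then fails φ_l, hence fails φ. -/
open scoped Classical

/-- If S is a non-accepting SCC, then there is a conjunct l such that every assumption
a_{l,i} is satisfied somewhere in the input projection of S while some guarantee
g_{l,j} is satisfied nowhere in the output projection of S; and any play converging
to S that satisfies GF(a_{l,i}) for all i fails φ_l, hence fails φ. -/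
theorem nonaccepting_scc_violates_grk {I O : Type*}
    {k : ℕ} {nl ml : Fin k → ℕ}
    (EI : I → I → Prop) (EO : O → O → Prop)
    (a : ∀ l : Fin k, Fin (nl l) → I → Prop)
    (g : ∀ l : Fin k, Fin (ml l) → O → Prop)
    (S : Set (I × O))
    (hS : ∃ s0, S = {t | SameSCC (prodEdge EI EO) s0 t})
    (hNA : ¬ ∀ l, (∀ j, ∃ p ∈ S, g l j p.2) ∨ (∃ ii, ∀ p ∈ S, ¬ a l ii p.1)) :
    ∃ l, (∀ ii, ∃ p ∈ S, a l ii p.1) ∧ (∃ j, ∀ p ∈ S, ¬ g l j p.2) ∧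
      ∀ π : ℕ → I × O, (∃ N, ∀ n, N ≤ n → π n ∈ S) →
        (∀ ii, InfOften (fun p : I × O => a l ii p.1) π) →
        ¬ SatGRk a g π := by
  push_neg at hNA
  obtain ⟨l, hg, ha⟩ := hNA
  refine ⟨l, ha, hg, ?_⟩
  intro π ⟨N, hN⟩ hA hsat
  obtain ⟨j, hj⟩ := hg
  obtain ⟨n, hn, hgn⟩ := hsat l hA j N
  exact hj (π n) (hN n hn) hgn
end
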